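/- Let m ≥ 1, n ≥ 2, and let σ be an independent set of C_{m,n} such that π(σ) ≠ ∅, every interval of σ has even length, and the equivalence class X_σ has more than one element. Then Σ_{τ ∈ X_σ} (−1)^{|τ|} = (−1)^{|σ| − |π(σ)| + 1}. -/
import Mathlib


/-- Adjacency in the cylinder graph: vertices are pairs (row, column) with
rows in {1,…,m} (enforced separately) and columns in ℤ/nℤ.  Two distinct
vertices are adjacent iff they are in the same row and their columns differ
by ±1 in ℤ/nℤ, or they are in the same column and their rows differ by 1. -/
def cylAdj (n : ℕ) (v w : ℕ × ZMod n) : Prop :=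
  v ≠ w ∧ ((v.1 = w.1 ∧ (w.2 = v.2 + 1 ∨ v.2 = w.2 + 1)) ∨
    (v.2 = w.2 ∧ (v.1 + 1 = w.1 ∨ w.1 + 1 = v.1)))

/-- `σ` is an independent set of the cylinder graph `C_{m,n}`:
its vertices lie in {1,…,m} × ℤ/nℤ and no two of them are adjacent. -/
def cylIndep (m n : ℕ) (σ : Finset (ℕ × ZMod n)) : Prop :=
  (∀ v ∈ σ, 1 ≤ v.1 ∧ v.1 ≤ m) ∧ ∀ v ∈ σ, ∀ w ∈ σ, ¬ cylAdj n v w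

/-- Partition function of the hard square model at activity −1 on `C_{m,n}`:
`Z(C_{m,n}) = Σ_σ (−1)^{|σ|}` over all independent sets `σ`. -/
noncomputable def Zcyl (m n : ℕ) : ℤ :=
  ∑ᶠ σ ∈ {σ : Finset (ℕ × ZMod n) | cylIndep m n σ}, (-1 : ℤ) ^ σ.card

/-- `π(σ)`: the set of columns `j ∈ ℤ/nℤ` such that `(1,j) ∈ σ`. -/
def piRow (n : ℕ) (σ : Finset (ℕ × ZMod n)) : Finset (ZMod n) :=
  (σ.filter fun v => v.1 = 1).image Prod.snd

/-- For a set `P ⊆ ℤ/nℤ` of columns, `cOffset n P j` is the least `r ≥ 1`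
with `j − r ∈ P` (and `0` if no such `r` exists, i.e. if `P = ∅`).
For `j` a position of an interval of `P` this is the offset `r` of `j` in its
interval (so `j` is an even position iff `cOffset n P j` is positive and even);
for `x ∈ P` it is the length of the interval ending at `x`, i.e. the cyclic gap
from the previous element of `P` to `x`. -/
noncomputable def cOffset (n : ℕ) (P : Finset (ZMod n)) (j : ZMod n) : ℕ :=
  sInf {r : ℕ | 0 < r ∧ j - (r : ZMod n) ∈ P}

/-- `π_e`: the elements of `P` sitting in even position of their interval. -/
noncomputable def piE (n : ℕ) (P : Finset (ZMod n)) : Finset (ZMod n) :=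
  P.filter fun x => 0 < cOffset n P x ∧ Even (cOffset n P x)

/-- `π_o`: the elements of `P` sitting in odd position of their interval. -/
noncomputable def piO (n : ℕ) (P : Finset (ZMod n)) : Finset (ZMod n) :=
  P.filter fun x => Odd (cOffset n P x)

/-- The column `j` is free in `σ`: `(1,j) ∉ σ` and `σ ∪ {(1,j)}` is independent. -/
def freeCol (m n : ℕ) (σ : Finset (ℕ × ZMod n)) (j : ZMod n) : Prop :=
  ((1 : ℕ), j) ∉ σ ∧ cylIndep m n (insert ((1 : ℕ), j) σ)

/-- The closure `σ̂` of `σ`: `σ` together with all `(1,j)` where `j` is a free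
even position of one of the intervals of `σ` (if `π(σ) = ∅` nothing is added,
since then `cOffset` vanishes identically). -/
def clo (m n : ℕ) (σ : Finset (ℕ × ZMod n)) : Set (ℕ × ZMod n) :=
  ↑σ ∪ {v | v.1 = 1 ∧ 0 < cOffset n (piRow n σ) v.2 ∧
    Even (cOffset n (piRow n σ) v.2) ∧ freeCol m n σ v.2}

/-- The equivalence class `X_σ` of `σ`: all independent sets with the same closure. -/
def Xclass (m n : ℕ) (σ : Finset (ℕ × ZMod n)) : Set (Finset (ℕ × ZMod n)) :=
  {τ | cylIndep m n τ ∧ clo m n τ = clo m n σ}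

lemma mem_piRow {n : ℕ} {σ : Finset (ℕ × ZMod n)} {j : ZMod n} :
    j ∈ piRow n σ ↔ ((1:ℕ), j) ∈ σ := by
  unfold piRow
  simp only [Finset.mem_image, Finset.mem_filter]
  constructor
  · rintro ⟨v, ⟨hv, hv1⟩, rfl⟩
    have hv2 : v = (1, v.2) := by rw [← hv1]
    rwa [← hv2]
  · intro h; exact ⟨(1, j), ⟨h, rfl⟩, rfl⟩

lemma cylAdj_symm {n : ℕ} {v w : ℕ × ZMod n} (h : cylAdj n v w) : cylAdj n w v := by
  obtain ⟨hne, h⟩ := h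
  refine ⟨hne.symm, ?_⟩
  rcases h with ⟨h1, h2⟩ | ⟨h1, h2⟩
  · exact Or.inl ⟨h1.symm, h2.symm⟩
  · exact Or.inr ⟨h1.symm, h2.symm⟩

lemma cOffset_set_nonempty {n : ℕ} [NeZero n] {P : Finset (ZMod n)} (hP : P.Nonempty)
    (j : ZMod n) : {r : ℕ | 0 < r ∧ j - (r : ZMod n) ∈ P}.Nonempty := by
  obtain ⟨x, hx⟩ := hP
  by_cases h : j = x
  · exact ⟨n, Nat.pos_of_ne_zero (NeZero.ne n), by simp [ZMod.natCast_self, h, hx]⟩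
  · refine ⟨(j - x).val, ?_, ?_⟩
    · have hne : j - x ≠ 0 := sub_ne_zero.mpr h
      exact Nat.pos_of_ne_zero fun h0 => hne ((ZMod.val_eq_zero _).mp h0)
    · rw [ZMod.natCast_rightInverse (j - x)]
      simpa using hx

lemma cOffset_pos {n : ℕ} [NeZero n] {P : Finset (ZMod n)} (hP : P.Nonempty) (j : ZMod n) :
    0 < cOffset n P j := (Nat.sInf_mem (cOffset_set_nonempty hP j)).1

lemma cOffset_sub_mem {n : ℕ} [NeZero n] {P : Finset (ZMod n)} (hP : P.Nonempty) (j : ZMod n) :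
    j - (cOffset n P j : ZMod n) ∈ P := (Nat.sInf_mem (cOffset_set_nonempty hP j)).2

lemma cOffset_le {n : ℕ} {P : Finset (ZMod n)} {j : ZMod n} {r : ℕ} (h1 : 0 < r)
    (h2 : j - (r : ZMod n) ∈ P) : cOffset n P j ≤ r := Nat.sInf_le ⟨h1, h2⟩

lemma cOffset_empty {n : ℕ} (j : ZMod n) : cOffset n (∅ : Finset (ZMod n)) j = 0 := by
  unfold cOffset
  convert Nat.sInf_empty
  simp

lemma cOffset_succ_of_mem {n : ℕ} {P : Finset (ZMod n)} {j : ZMod n} (hj : j ∈ P) :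
    cOffset n P (j + 1) = 1 := by
  have h1 : (1:ℕ) ∈ {r : ℕ | 0 < r ∧ (j + 1) - (r : ZMod n) ∈ P} := ⟨one_pos, by simpa using hj⟩
  have hle := Nat.sInf_le h1
  obtain ⟨h0, -⟩ := Nat.sInf_mem ⟨1, h1⟩
  unfold cOffset
  omega

lemma cOffset_succ_of_not_mem {n : ℕ} [NeZero n] {P : Finset (ZMod n)} (hP : P.Nonempty)
    {j : ZMod n} (hj : j ∉ P) : cOffset n P (j + 1) = cOffset n P j + 1 := by
  have hdp : 0 < cOffset n P j := cOffset_pos hP j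
  have hdm := cOffset_sub_mem hP j
  have hcast : (j + 1) - ((cOffset n P j + 1 : ℕ) : ZMod n) = j - (cOffset n P j : ZMod n) := by
    push_cast; ring
  have hle : cOffset n P (j + 1) ≤ cOffset n P j + 1 :=
    cOffset_le (by omega) (by rw [hcast]; exact hdm)
  have hep : 0 < cOffset n P (j + 1) := cOffset_pos hP (j + 1)
  have hem : (j + 1) - ((cOffset n P (j + 1) : ℕ) : ZMod n) ∈ P := cOffset_sub_mem hP (j + 1)
  have he1 : cOffset n P (j + 1) ≠ 1 := by
    intro h
    rw [h] at hem
    apply hj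
    simpa using hem
  have hge : cOffset n P j + 1 ≤ cOffset n P (j + 1) := by
    have h4 : (cOffset n P (j + 1) - 1) + 1 = cOffset n P (j + 1) := by omega
    have hcast2 : j - ((cOffset n P (j + 1) - 1 : ℕ) : ZMod n)
        = (j + 1) - ((cOffset n P (j + 1) : ℕ) : ZMod n) := by
      conv_rhs => rw [← h4]
      push_cast
      ring
    have := cOffset_le (P := P) (j := j) (r := cOffset n P (j + 1) - 1) (by omega)
      (by rw [hcast2]; exact hem)
    omega
  omega

lemma even_cOffset_succ_iff {n : ℕ} [NeZero n] {P : Finset (ZMod n)} (hP : P.Nonempty)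
    (heven : ∀ x ∈ P, Even (cOffset n P x)) (j : ZMod n) :
    Even (cOffset n P (j + 1)) ↔ ¬ Even (cOffset n P j) := by
  by_cases hj : j ∈ P
  · rw [cOffset_succ_of_mem hj]
    simp [heven j hj]
  · rw [cOffset_succ_of_not_mem hP hj, Nat.even_add_one]

lemma even_cOffset_add_nat {n : ℕ} [NeZero n] {P : Finset (ZMod n)} (hP : P.Nonempty)
    (heven : ∀ x ∈ P, Even (cOffset n P x)) (j : ZMod n) (r : ℕ) :
    Even (cOffset n P (j + (r : ZMod n))) ↔ (Even (cOffset n P j) ↔ Even r) := by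
  induction r with
  | zero => simp
  | succ k ih =>
    have hc : j + ((k + 1 : ℕ) : ZMod n) = (j + (k : ZMod n)) + 1 := by push_cast; ring
    rw [hc, even_cOffset_succ_iff hP heven, ih, Nat.even_add_one]
    tauto

lemma even_cOffset_transfer {n : ℕ} [NeZero n] {P S : Finset (ZMod n)} (hP : P.Nonempty)
    (heven : ∀ x ∈ P, Even (cOffset n P x)) (hS : S.Nonempty)
    (hSE : ∀ s ∈ S, Even (cOffset n P s)) (j : ZMod n) :
    Even (cOffset n S j) ↔ Even (cOffset n P j) := by
  have h1 : j - ((cOffset n S j : ℕ) : ZMod n) ∈ S := cOffset_sub_mem hS j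
  have h2 : Even (cOffset n P (j - ((cOffset n S j : ℕ) : ZMod n))) := hSE _ h1
  have h3 : j = (j - ((cOffset n S j : ℕ) : ZMod n)) + ((cOffset n S j : ℕ) : ZMod n) := by ring
  conv_rhs => rw [h3]
  rw [even_cOffset_add_nat hP heven]
  tauto


lemma clo_canonical (m n : ℕ) [NeZero n] (hm : 1 ≤ m)
    (P : Finset (ZMod n)) (hP : P.Nonempty)
    (heven : ∀ x ∈ P, Even (cOffset n P x))
    (τ : Finset (ℕ × ZMod n)) (hτ : cylIndep m n τ)
    (hπτ : (piRow n τ).Nonempty)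
    (hE : ∀ j ∈ piRow n τ, Even (cOffset n P j)) :
    clo m n τ = ↑(τ.filter fun v => v.1 ≠ 1) ∪
      {v | v.1 = 1 ∧ Even (cOffset n P v.2) ∧ ((2:ℕ), v.2) ∉ τ} := by
  have hadj12 : ∀ j : ZMod n, cylAdj n ((1:ℕ), j) ((2:ℕ), j) := fun j =>
    ⟨by simp, Or.inr ⟨rfl, Or.inl rfl⟩⟩
  ext ⟨v1, v2⟩
  simp only [clo, Set.mem_union, Finset.coe_filter, Set.mem_setOf_eq, Finset.mem_coe,
    Finset.mem_filter]
  constructor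
  · rintro (hvτ | ⟨h1, _, hev, hfree⟩)
    · by_cases h1 : v1 = 1
      · subst h1
        refine Or.inr ⟨rfl, hE v2 (mem_piRow.mpr hvτ), fun h2 => ?_⟩
        exact hτ.2 _ hvτ _ h2 (hadj12 v2)
      · exact Or.inl ⟨hvτ, h1⟩
    · replace h1 : v1 = 1 := h1
      subst h1
      refine Or.inr ⟨rfl, (even_cOffset_transfer hP heven hπτ hE v2).mp hev, fun h2 => ?_⟩
      exact hfree.2.2 _ (Finset.mem_insert_self _ _) _ (Finset.mem_insert_of_mem h2)
        (hadj12 v2)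
  · rintro (⟨hvτ, -⟩ | ⟨h1, hev, h2⟩)
    · exact Or.inl hvτ
    · replace h1 : v1 = 1 := h1
      subst h1
      by_cases hvτ : ((1:ℕ), v2) ∈ τ
      · exact Or.inl hvτ
      · refine Or.inr ⟨rfl, cOffset_pos hπτ v2,
          (even_cOffset_transfer hP heven hπτ hE v2).mpr hev, hvτ, ?_, ?_⟩
        · intro w hw
          rcases Finset.mem_insert.mp hw with rfl | hw
          · exact ⟨le_refl 1, hm⟩
          · exact hτ.1 _ hw
        · have key : ∀ w ∈ τ, ¬ cylAdj n ((1:ℕ), v2) w := by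
            rintro ⟨w1, w2⟩ hw ⟨hne, ⟨hc1, hc2⟩ | ⟨hc1, hc2⟩⟩
            · replace hc1 : (1:ℕ) = w1 := hc1
              subst hc1
              have hw2 : w2 ∈ piRow n τ := mem_piRow.mpr hw
              have hEw := hE _ hw2
              rcases hc2 with h3 | h3
              · replace h3 : w2 = v2 + 1 := h3
                subst h3
                rw [even_cOffset_succ_iff hP heven] at hEw
                exact hEw hev
              · replace h3 : v2 = w2 + 1 := h3
                subst h3
                rw [even_cOffset_succ_iff hP heven] at hev
                exact hev hEw
            · replace hc1 : v2 = w2 := hc1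
              subst hc1
              rcases hc2 with h3 | h3
              · replace h3 : 1 + 1 = w1 := h3
                exact h2 (by rwa [← h3] at hw)
              · replace h3 : w1 + 1 = 1 := h3
                have := (hτ.1 _ hw).1
                simp only at this
                omega
          intro x hx y hy hadj
          rcases Finset.mem_insert.mp hx with rfl | hx
          · rcases Finset.mem_insert.mp hy with rfl | hy
            · exact hadj.1 rfl
            · exact key _ hy hadj
          · rcases Finset.mem_insert.mp hy with rfl | hy
            · exact key _ hx (cylAdj_symm hadj)
            · exact hτ.2 _ hx _ hy hadj


/-- If `σ` is an independent set of `C_{m,n}` with `π(σ) ≠ ∅`,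
all intervals of even length, and `|X_σ| > 1`, then
`Σ_{τ ∈ X_σ} (−1)^{|τ|} = (−1)^{|σ| − |π(σ)| + 1}`. -/
theorem class_sum_even_intervals (m n : ℕ) (hm : 1 ≤ m) (hn : 2 ≤ n)
    (σ : Finset (ℕ × ZMod n)) (hσ : cylIndep m n σ)
    (hπ : (piRow n σ).Nonempty)
    (heven : ∀ x ∈ piRow n σ, Even (cOffset n (piRow n σ) x))
    (hbig : (Xclass m n σ).Nontrivial) :
    ∑ᶠ τ ∈ Xclass m n σ, (-1 : ℤ) ^ τ.card =
      (-1 : ℤ) ^ (σ.card - (piRow n σ).card + 1) := by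
  classical
  haveI : NeZero n := ⟨by omega⟩
  clear hbig
  set P := piRow n σ with hPdef
  set B := σ.filter (fun v => v.1 ≠ 1) with hBdef
  set A := Finset.univ.filter
    (fun j : ZMod n => Even (cOffset n P j) ∧ ((2:ℕ), j) ∉ B) with hAdef
  set f : Finset (ZMod n) → Finset (ℕ × ZMod n) :=
    fun S => B ∪ S.image (fun j => ((1:ℕ), j)) with hfdef
  have hmemB : ∀ v : ℕ × ZMod n, v ∈ B ↔ v ∈ σ ∧ v.1 ≠ 1 := fun v => Finset.mem_filter
  have hmemf : ∀ (S : Finset (ZMod n)) (v : ℕ × ZMod n),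
      v ∈ f S ↔ (v ∈ B ∨ (v.1 = 1 ∧ v.2 ∈ S)) := by
    intro S v
    simp only [hfdef, Finset.mem_union, Finset.mem_image]
    constructor
    · rintro (h | ⟨j, hj, rfl⟩)
      · exact Or.inl h
      · exact Or.inr ⟨rfl, hj⟩
    · rintro (h | ⟨h1, h2⟩)
      · exact Or.inl h
      · refine Or.inr ⟨v.2, h2, ?_⟩
        rw [← h1]
  have hpiRow_f : ∀ S : Finset (ZMod n), piRow n (f S) = S := by
    intro S
    ext j
    rw [mem_piRow, hmemf]
    constructor
    · rintro (h | ⟨-, h⟩)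
      · exact absurd rfl ((hmemB _).mp h).2
      · exact h
    · intro hj
      exact Or.inr ⟨rfl, hj⟩
  have hfilter_f : ∀ S : Finset (ZMod n), (f S).filter (fun v => v.1 ≠ 1) = B := by
    intro S
    ext v
    simp only [Finset.mem_filter]
    rw [hmemf]
    constructor
    · rintro ⟨h | ⟨h1, -⟩, hne⟩
      · exact h
      · exact absurd h1 hne
    · intro hv
      exact ⟨Or.inl hv, ((hmemB v).mp hv).2⟩
  have hmem2f : ∀ (S : Finset (ZMod n)) (j : ZMod n),
      ((2:ℕ), j) ∈ f S ↔ ((2:ℕ), j) ∈ B := by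
    intro S j
    rw [hmemf]
    constructor
    · rintro (h | ⟨h1, -⟩)
      · exact h
      · exact absurd h1 (by norm_num)
    · exact Or.inl
  have hσeq : σ = f P := by
    ext v
    rw [hmemf, hmemB]
    constructor
    · intro hv
      by_cases h1 : v.1 = 1
      · have hveq : ((1:ℕ), v.2) = v := by rw [← h1]
        exact Or.inr ⟨h1, mem_piRow.mpr (by rwa [hveq])⟩
      · exact Or.inl ⟨hv, h1⟩
    · rintro (⟨hv, -⟩ | ⟨h1, h2⟩)
      · exact hv
      · have hveq : ((1:ℕ), v.2) = v := by rw [← h1]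
        rw [← hveq]
        exact mem_piRow.mp h2
  have hPA : ∀ x ∈ P, x ∈ A := by
    intro x hx
    have h1x : ((1:ℕ), x) ∈ σ := mem_piRow.mp hx
    refine Finset.mem_filter.mpr ⟨Finset.mem_univ _, heven x hx, fun h2 => ?_⟩
    have h2σ : ((2:ℕ), x) ∈ σ := ((hmemB _).mp h2).1
    exact hσ.2 _ h1x _ h2σ ⟨by simp, Or.inr ⟨rfl, Or.inl rfl⟩⟩
  have hAspec : ∀ j ∈ A, Even (cOffset n P j) ∧ ((2:ℕ), j) ∉ B :=
    fun j hj => (Finset.mem_filter.mp hj).2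
  have hindep_f : ∀ S : Finset (ZMod n), S ⊆ A → cylIndep m n (f S) := by
    intro S hSA
    have hrr : ∀ j j', j ∈ S → j' ∈ S → ¬ cylAdj n ((1:ℕ), j) ((1:ℕ), j') := by
      rintro j j' hj hj' ⟨hne, ⟨-, hc2⟩ | ⟨hc1, hc2⟩⟩
      · have hEj : Even (cOffset n P j) := (hAspec _ (hSA hj)).1
        have hEj' : Even (cOffset n P j') := (hAspec _ (hSA hj')).1
        rcases hc2 with h3 | h3
        · replace h3 : j' = j + 1 := h3
          subst h3
          rw [even_cOffset_succ_iff hπ heven] at hEj'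
          exact hEj' hEj
        · replace h3 : j = j' + 1 := h3
          subst h3
          rw [even_cOffset_succ_iff hπ heven] at hEj
          exact hEj hEj'
      · rcases hc2 with h3 | h3
        · replace h3 : 1 + 1 = 1 := h3
          omega
        · replace h3 : 1 + 1 = 1 := h3
          omega
    have hmix : ∀ v ∈ B, ∀ j ∈ S, ¬ cylAdj n ((1:ℕ), j) v := by
      rintro ⟨v1, v2⟩ hv j hj ⟨hne, ⟨hc1, -⟩ | ⟨hc1, hc2⟩⟩
      · replace hc1 : (1:ℕ) = v1 := hc1
        exact ((hmemB _).mp hv).2 hc1.symm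
      · replace hc1 : j = v2 := hc1
        subst hc1
        rcases hc2 with h3 | h3
        · replace h3 : 1 + 1 = v1 := h3
          exact (hAspec _ (hSA hj)).2 (by rwa [← h3] at hv)
        · replace h3 : v1 + 1 = 1 := h3
          have hb := (hσ.1 _ ((hmemB _).mp hv).1).1
          omega
    constructor
    · intro v hv
      rcases (hmemf S v).mp hv with h | ⟨h1, -⟩
      · exact hσ.1 _ ((hmemB v).mp h).1
      · rw [h1]
        exact ⟨le_refl 1, hm⟩
    · intro v hv w hw hadj
      rcases (hmemf S v).mp hv with hvB | ⟨hv1, hv2⟩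
      · rcases (hmemf S w).mp hw with hwB | ⟨hw1, hw2⟩
        · exact hσ.2 _ ((hmemB v).mp hvB).1 _ ((hmemB w).mp hwB).1 hadj
        · have hweq : ((1:ℕ), w.2) = w := by rw [← hw1]
          refine hmix v hvB w.2 hw2 ?_
          rw [hweq]
          exact cylAdj_symm hadj
      · rcases (hmemf S w).mp hw with hwB | ⟨hw1, hw2⟩
        · have hveq : ((1:ℕ), v.2) = v := by rw [← hv1]
          refine hmix w hwB v.2 hv2 ?_
          rw [hveq]
          exact hadj
        · have hveq : ((1:ℕ), v.2) = v := by rw [← hv1]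
          have hweq : ((1:ℕ), w.2) = w := by rw [← hw1]
          refine hrr v.2 w.2 hv2 hw2 ?_
          rw [hveq, hweq]
          exact hadj
  have hC : ∀ S : Finset (ZMod n), S.Nonempty → S ⊆ A →
      clo m n (f S) = ↑B ∪ {v : ℕ × ZMod n | v.1 = 1 ∧ Even (cOffset n P v.2) ∧
        ((2:ℕ), v.2) ∉ B} := by
    intro S hSne hSA
    have h1 := clo_canonical m n hm P hπ heven (f S) (hindep_f S hSA)
      (by rw [hpiRow_f]; exact hSne)
      (by rw [hpiRow_f]; exact fun j hj => (hAspec _ (hSA hj)).1)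
    rw [h1, hfilter_f]
    congr 1
    ext v
    simp only [Set.mem_setOf_eq]
    rw [hmem2f S v.2]
  have hcloσ : clo m n σ = ↑B ∪ {v : ℕ × ZMod n | v.1 = 1 ∧ Even (cOffset n P v.2) ∧
      ((2:ℕ), v.2) ∉ B} := by
    conv_lhs => rw [hσeq]
    exact hC P hπ (fun x hx => hPA x hx)
  set T := A.powerset.filter (fun S => S.Nonempty) with hTdef
  have hXchar : Xclass m n σ = ↑(T.image f) := by
    ext τ
    simp only [Xclass, Set.mem_setOf_eq, Finset.coe_image, Set.mem_image, Finset.mem_coe,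
      hTdef, Finset.mem_filter, Finset.mem_powerset]
    constructor
    · rintro ⟨hτind, hcloτ⟩
      rw [hcloσ] at hcloτ
      have hτsub : ∀ v ∈ τ, (v : ℕ × ZMod n) ∈ clo m n τ :=
        fun v hv => Or.inl (Finset.mem_coe.mpr hv)
      have hSne : (piRow n τ).Nonempty := by
        by_contra hSne
        rw [Finset.not_nonempty_iff_eq_empty] at hSne
        have hclot : clo m n τ = ↑τ := by
          simp [clo, hSne, cOffset_empty]
        obtain ⟨x0, hx0⟩ := id hπ
        have h1 : ((1:ℕ), x0) ∈ clo m n τ := by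
          rw [hcloτ]
          exact Or.inr ⟨rfl, (hAspec _ (hPA _ hx0)).1, (hAspec _ (hPA _ hx0)).2⟩
        rw [hclot] at h1
        have h2 : x0 ∈ piRow n τ := mem_piRow.mpr (Finset.mem_coe.mp h1)
        rw [hSne] at h2
        simp at h2
      have hfb : τ.filter (fun v => v.1 ≠ 1) = B := by
        ext v
        simp only [Finset.mem_filter]
        constructor
        · rintro ⟨hvτ, hv1⟩
          have hc := hτsub v hvτ
          rw [hcloτ] at hc
          rcases hc with h | h
          · exact Finset.mem_coe.mp h
          · exact absurd h.1 hv1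
        · intro hvB
          have hc : (v : ℕ × ZMod n) ∈ clo m n τ := by
            rw [hcloτ]
            exact Or.inl (Finset.mem_coe.mpr hvB)
          rcases hc with h | h
          · exact ⟨Finset.mem_coe.mp h, ((hmemB v).mp hvB).2⟩
          · exact absurd h.1 ((hmemB v).mp hvB).2
      have hSA : ∀ j ∈ piRow n τ, j ∈ A := by
        intro j hj
        have h1j : ((1:ℕ), j) ∈ τ := mem_piRow.mp hj
        have hc := hτsub _ h1j
        rw [hcloτ] at hc
        rcases hc with h | h
        · exact absurd rfl ((hmemB _).mp (Finset.mem_coe.mp h)).2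
        · exact Finset.mem_filter.mpr ⟨Finset.mem_univ _, h.2.1, h.2.2⟩
      refine ⟨piRow n τ, ⟨fun j hj => hSA j hj, hSne⟩, Finset.ext fun v => ?_⟩
      rw [hmemf]
      constructor
      · rintro (hvB | ⟨h1, h2⟩)
        · rw [← hfb] at hvB
          exact (Finset.mem_filter.mp hvB).1
        · have hveq : ((1:ℕ), v.2) = v := by rw [← h1]
          rw [← hveq]
          exact mem_piRow.mp h2
      · intro hvτ
        by_cases h1 : v.1 = 1
        · have hveq : ((1:ℕ), v.2) = v := by rw [← h1]
          exact Or.inr ⟨h1, mem_piRow.mpr (by rwa [hveq])⟩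
        · refine Or.inl ?_
          rw [← hfb]
          exact Finset.mem_filter.mpr ⟨hvτ, h1⟩
    · rintro ⟨S, ⟨hSA, hSne⟩, rfl⟩
      exact ⟨hindep_f S hSA, by rw [hC S hSne hSA, hcloσ]⟩
  rw [hXchar, finsum_mem_coe_finset]
  have hinj : ∀ S ∈ T, ∀ S' ∈ T, f S = f S' → S = S' := by
    intro S _ S' _ h
    have h2 := congrArg (piRow n) h
    rwa [hpiRow_f, hpiRow_f] at h2
  rw [Finset.sum_image hinj]
  have hcardf : ∀ S : Finset (ZMod n), (f S).card = B.card + S.card := by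
    intro S
    have hdisj : Disjoint B (S.image fun j => ((1:ℕ), j)) := by
      rw [Finset.disjoint_left]
      intro v hvB hvI
      obtain ⟨j, hj, rfl⟩ := Finset.mem_image.mp hvI
      exact ((hmemB _).mp hvB).2 rfl
    have hinj1 : Function.Injective (fun j : ZMod n => ((1:ℕ), j)) := fun a b hab => by
      simpa using hab
    simp only [hfdef]
    rw [Finset.card_union_of_disjoint hdisj, Finset.card_image_of_injective _ hinj1]
  have hσcard : σ.card = B.card + P.card := by
    conv_lhs => rw [hσeq]
    exact hcardf P
  have hA_ne : A.Nonempty := by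
    obtain ⟨x0, hx0⟩ := id hπ
    exact ⟨x0, hPA _ hx0⟩
  have hTsum : ∑ S ∈ T, (-1:ℤ)^S.card = -1 := by
    have h0 : ∑ S ∈ A.powerset, (-1:ℤ)^S.card = 0 :=
      Finset.sum_powerset_neg_one_pow_card_of_nonempty hA_ne
    have hsplit := Finset.sum_filter_add_sum_filter_not A.powerset
      (fun S => S.Nonempty) (fun S => (-1:ℤ)^S.card)
    have hempty : A.powerset.filter (fun S => ¬ S.Nonempty) = {∅} := by
      ext S
      simp [Finset.not_nonempty_iff_eq_empty, Finset.mem_powerset]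
      intro h
      subst h
      exact Finset.empty_subset _
    rw [hempty, h0, Finset.sum_singleton] at hsplit
    simp only [Finset.card_empty, pow_zero] at hsplit
    rw [hTdef]
    linarith
  have hsum : ∑ S ∈ T, (-1 : ℤ) ^ (f S).card = (-1:ℤ) ^ (B.card + 1) := by
    calc ∑ S ∈ T, (-1 : ℤ) ^ (f S).card
        = ∑ S ∈ T, (-1:ℤ)^B.card * (-1:ℤ)^S.card := by
          refine Finset.sum_congr rfl fun S _ => ?_
          rw [hcardf, pow_add]
      _ = (-1:ℤ)^B.card * ∑ S ∈ T, (-1:ℤ)^S.card := by rw [Finset.mul_sum]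
      _ = (-1:ℤ)^B.card * (-1) := by rw [hTsum]
      _ = (-1:ℤ)^(B.card+1) := by rw [pow_succ]
  rw [hsum]
  congr 1
  omega
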